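/- arXiv:1607.00999 — 2 statements merged into one kernel-verified Lean document; each statement's English description precedes it below -/
import Mathlib

section
/- Let (Z_n) be the branching process associated to a nearest-neighbor random walk (S_n) on Z started at 0, defined by Z_0 = 1 and Z_n = #{k in {1,...,τ(-1)} : S_{k-1} = n-1 and S_k = n} for n ≥ 1, where τ(-1) is the first hitting time of -1. Then, on the event that τ(-1) is finite, τ(-1) = 2·(Σ_{j=0}^∞ Z_j) - 1. -/
/-!
Every step of the walk up to `τ(-1)` is `±1`, and the walk ends at `-1` having started at `0`,
so there are `(τ(-1) - 1) / 2` up-steps among them. Before `τ(-1)` the walk stays `≥ 0`, so each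
up-step ends at some level `n ≥ 1` and is counted in exactly one `Z n`; hence `Σ_{n ≥ 1} Z n` is
the number of up-steps, and `Z 0 = 1` supplies the remaining `+1`.
-/

open Finset

namespace IntPath

variable {S : ℕ → ℤ}

def upSteps (S : ℕ → ℤ) (K : Finset ℕ) : Finset ℕ :=
  {k ∈ K | S k - S (k - 1) = 1}

theorem le_add_of_forall_le_add_one (hup : ∀ n, S (n + 1) ≤ S n + 1) (n : ℕ) :
    S n ≤ S 0 + n := by
  induction n with
  | zero => simp
  | succ n ih => have := hup n; push_cast; omega

theorem nonneg_of_forall_ne_neg_one {m : ℕ} (h0 : 0 ≤ S 0)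
    (hdown : ∀ n, S n - 1 ≤ S (n + 1)) (hne : ∀ k, 1 ≤ k → k < m → S k ≠ -1) :
    ∀ k < m, 0 ≤ S k := by
  intro k hk
  induction k with
  | zero => exact h0
  | succ k ih =>
    have := ih (by omega)
    have := hdown k
    have := hne (k + 1) (by omega) hk
    omega

theorem two_mul_card_upSteps_Icc (hstep : ∀ n, S (n + 1) - S n = 1 ∨ S (n + 1) - S n = -1)
    (m : ℕ) : 2 * (#(upSteps S (Icc 1 m)) : ℤ) = m + S m - S 0 := by
  induction m with
  | zero => simp [upSteps]
  | succ m ih =>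
    rw [upSteps, card_filter, sum_Icc_succ_top (by omega), ← card_filter] at *
    rcases hstep m with h | h <;>
      simp only [add_tsub_cancel_right, h, Int.reduceNeg, reduceCtorEq, ↓reduceIte, add_zero,
        Nat.cast_add, Nat.cast_one] <;> omega

theorem sum_card_upCrossings (K : Finset ℕ) {N : ℕ} (hnonneg : ∀ k ∈ K, 0 ≤ S (k - 1))
    (hbound : ∀ k ∈ K, S k ≤ N) :
    ∑ n ∈ Icc 1 N, #{k ∈ K | S (k - 1) = (n : ℤ) - 1 ∧ S k = n} = #(upSteps S K) := by
  rw [card_eq_sum_card_fiberwise (f := fun k => (S k).toNat) (t := Icc 1 N)]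
  · refine sum_congr rfl fun n hn => congrArg card ?_
    ext k
    simp only [upSteps, mem_filter, mem_Icc] at hn ⊢
    constructor
    · rintro ⟨hk, h1, h2⟩
      exact ⟨⟨hk, by omega⟩, by omega⟩
    · rintro ⟨⟨hk, h1⟩, h2⟩
      have := hnonneg k hk
      exact ⟨hk, by omega, by omega⟩
  · intro k hk
    simp only [upSteps, coe_filter, Set.mem_ofPred_eq, coe_Icc, Set.mem_Icc] at hk ⊢
    have := hnonneg k hk.1
    have := hbound k hk.1
    omega

end IntPath

open IntPath in
/-- Deterministic path identity: for a nearest-neighbor walk `S` on `ℤ` started at `0`,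
with `τ := inf {n ≥ 1 : S n = -1}` finite, the associated branching process
`Z 0 = 1`, `Z n = #{k ∈ {1,…,τ} : S (k-1) = n-1 ∧ S k = n}` satisfies
`τ = 2 (Σ_j Z j) - 1`. -/
theorem stmt0 (S : ℕ → ℤ) (hS0 : S 0 = 0)
    (hstep : ∀ n : ℕ, S (n + 1) - S n = 1 ∨ S (n + 1) - S n = -1)
    (hhit : ∃ n : ℕ, 1 ≤ n ∧ S n = -1)
    (τ : ℕ) (hτ : τ = sInf {n : ℕ | 1 ≤ n ∧ S n = -1})
    (Z : ℕ → ℕ) (hZ0 : Z 0 = 1)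
    (hZ : ∀ n : ℕ, 1 ≤ n →
      Z n = ((Finset.Icc 1 τ).filter
        (fun k => S (k - 1) = (n : ℤ) - 1 ∧ S k = (n : ℤ))).card) :
    (τ : ℤ) = 2 * (∑' j : ℕ, (Z j : ℤ)) - 1 := by
  obtain ⟨hτ1, hSτ⟩ : 1 ≤ τ ∧ S τ = -1 := by rw [hτ]; exact Nat.sInf_mem hhit
  have hup (n : ℕ) : S (n + 1) ≤ S n + 1 := by rcases hstep n with h | h <;> omega
  have hdown (n : ℕ) : S n - 1 ≤ S (n + 1) := by rcases hstep n with h | h <;> omega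
  have hle (k : ℕ) : S k ≤ k := by simpa [hS0] using le_add_of_forall_le_add_one hup k
  have hnonneg : ∀ k < τ, 0 ≤ S k :=
    nonneg_of_forall_ne_neg_one hS0.ge hdown fun k hk1 hkτ hk => Nat.notMem_of_lt_sInf (s := {n | 1 ≤ n ∧ S n = -1})
        (by rwa [← hτ]) ⟨hk1, hk⟩
  have hvanish : ∀ n ∉ range (τ + 1), (Z n : ℤ) = 0 := by
    intro n hn
    rw [mem_range, not_lt] at hn
    rw [hZ n (by omega), Nat.cast_eq_zero, card_eq_zero, filter_eq_empty_iff]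
    rintro k hk ⟨-, hSk⟩
    have := hle k
    rw [mem_Icc] at hk
    omega
  have hsum : ∑ n ∈ Icc 1 τ, Z n = #(upSteps S (Icc 1 τ)) := by
    rw [sum_congr rfl fun n hn => hZ n (mem_Icc.1 hn).1]
    exact sum_card_upCrossings _ (fun k hk => hnonneg _ (by rw [mem_Icc] at hk; omega))
      fun k hk => (hle k).trans (by rw [mem_Icc] at hk; omega)
  have hcount := two_mul_card_upSteps_Icc hstep τ
  rw [tsum_eq_sum hvanish, range_eq_Ico, sum_eq_sum_Ico_succ_bot (by omega), zero_add,
    Ico_add_one_right_eq_Icc, ← Nat.cast_sum, hsum, hZ0]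
  push_cast
  omega
end

section
/- For the quenched expected exit time bound: if g < h < i are integers and V is the potential of the environment, then E_ω^h[τ(g) ∧ τ(i)] ≤ Σ_{k=h}^{i−1} Σ_{l=g}^{k} (1 + e^{V(l)−V(l−1)}) e^{V(k)−V(l)}, and consequently E_ω^h[τ(g) ∧ τ(i)] ≤ 2(i−g+1)² exp(2·max_{g−1 ≤ l ≤ k ≤ i−1}(V(k) − V(l))). -/
open MeasureTheory Finset Real

/-- First exit time of `(g, i)` (strictly after time 0), as an `ℝ≥0∞`-valued time
(`∞` if the walk never exits); this is `τ(g) ∧ τ(i)`. -/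
noncomputable def exitTime (g i : ℤ) (S : ℕ → ℤ) : ENNReal :=
  ⨅ (n : ℕ) (_ : 1 ≤ n ∧ (S n = g ∨ S n = i)), (n : ENNReal)

/-! A function `u` with `ω x * u (x + 1) + (1 - ω x) * u (x - 1) + 1 ≤ u x` on `(g, i)` is a
Lyapunov function for the walk: along paths that have stayed in `(g, i)`, the quantity
`F n = E[u (S n); S stayed inside up to n]` drops by at least `P(S stayed inside up to n)` at
each step, so `∑ n, P(S stayed inside up to n) ≤ u h`, and this sum dominates the expected exit
time. The function `f x = ∑_{k=x}^{i-1} ∑_{l=g}^{k} (1 + ρ l) e^{V k - V l}`, with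
`ρ l = e^{V l - V (l-1)} = (1 - ω l) / ω l`, satisfies the equation with equality: its decrements
`D x = f x - f (x + 1)` obey `D x = 1 + ρ x + ρ x * D (x - 1)`, i.e.
`ω x * D x = 1 + (1 - ω x) * D (x - 1)`. The second bound counts the at most `(i - g + 1)²`
terms of `f h`, each at most `2 e^{2M}`. -/

open scoped ENNReal

lemma tsum_le_of_forall_add_le {a F : ℕ → ℝ≥0∞} (h : ∀ n, F (n + 1) + a n ≤ F n) :
    ∑' n, a n ≤ F 0 := by
  have partial_le : ∀ N, ∑ n ∈ range N, a n + F N ≤ F 0 := by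
    intro N
    induction N with
    | zero => simp
    | succ N ih =>
      calc ∑ n ∈ range (N + 1), a n + F (N + 1)
          = ∑ n ∈ range N, a n + (F (N + 1) + a N) := by rw [sum_range_succ]; ring
        _ ≤ ∑ n ∈ range N, a n + F N := by gcongr; exact h N
        _ ≤ F 0 := ih
  rw [ENNReal.tsum_eq_iSup_nat]
  exact iSup_le fun N => le_self_add.trans (partial_le N)

def IsDeterminedUpTo (n : ℕ) (A : Set (ℕ → ℤ)) : Prop :=
  ∀ S S' : ℕ → ℤ, (∀ m ≤ n, S m = S' m) → (S ∈ A ↔ S' ∈ A)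

def stayedInside (g i : ℤ) (n : ℕ) : Set (ℕ → ℤ) :=
  {S | ∀ m ≤ n, S m ∈ Set.Ioo g i}

lemma measurableSet_eval_eq (n : ℕ) (x : ℤ) : MeasurableSet {S : ℕ → ℤ | S n = x} :=
  measurableSet_eq_fun (measurable_pi_apply n) measurable_const

lemma measurableSet_stayedInside (g i : ℤ) (n : ℕ) : MeasurableSet (stayedInside g i n) := by
  simp only [stayedInside, Set.ofPred_forall]
  exact .iInter fun m => .iInter fun _ => measurable_pi_apply m measurableSet_Ioo

lemma stayedInside_succ (g i : ℤ) (n : ℕ) :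
    stayedInside g i (n + 1) = stayedInside g i n ∩ {S | S (n + 1) ∈ Set.Ioo g i} := by
  ext S
  simp only [stayedInside, Set.mem_inter_iff, Set.mem_ofPred_eq]
  exact ⟨fun hS => ⟨fun m hm => hS m (by omega), hS _ le_rfl⟩,
    fun ⟨hS, hlast⟩ m hm => (Nat.le_succ_iff.1 hm).elim (hS m) (· ▸ hlast)⟩

lemma stayedInside_antitone (g i : ℤ) : Antitone (stayedInside g i) :=
  fun _ _ hmn _ hS m hm => hS m (hm.trans hmn)

lemma isDeterminedUpTo_stayedInside_inter (g i x : ℤ) (n : ℕ) :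
    IsDeterminedUpTo n (stayedInside g i n ∩ {S | S n = x}) := by
  intro S S' hSS'
  simp only [stayedInside, Set.mem_inter_iff, Set.mem_ofPred_eq]
  constructor
  · rintro ⟨hS, hx⟩
    exact ⟨fun m hm => hSS' m hm ▸ hS m hm, hSS' n le_rfl ▸ hx⟩
  · rintro ⟨hS, hx⟩
    exact ⟨fun m hm => (hSS' m hm).symm ▸ hS m hm, (hSS' n le_rfl).symm ▸ hx⟩

lemma exitTime_le_tsum_indicator {g i : ℤ} {S : ℕ → ℤ} (h0 : S 0 ∈ Set.Ioo g i)
    (hstep : ∀ n, S (n + 1) = S n + 1 ∨ S (n + 1) = S n - 1) :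
    exitTime g i S ≤ ∑' n, (stayedInside g i n).indicator 1 S := by
  classical
  by_cases hall : ∀ n, S ∈ stayedInside g i n
  · simp [Set.indicator_of_mem (hall _)]
  push Not at hall
  -- `k + 1` below is the first time `S` is outside `(g, i)`; a `±1` step from inside lands on
  -- `g` or `i` there.
  have hN : S ∉ stayedInside g i (Nat.find hall) := Nat.find_spec hall
  obtain ⟨k, hk⟩ : ∃ k, Nat.find hall = k + 1 := by
    refine Nat.exists_eq_succ_of_ne_zero fun h => hN ?_
    rw [h]
    intro m hm
    rwa [Nat.le_zero.1 hm]
  have hinside : ∀ m ≤ k, S ∈ stayedInside g i m := fun m hm =>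
    not_not.1 (Nat.find_min hall (by omega))
  have hexit : S (k + 1) = g ∨ S (k + 1) = i := by
    rw [hk, stayedInside_succ] at hN
    have hk_in := hinside k le_rfl k le_rfl
    simp only [Set.mem_inter_iff, Set.mem_ofPred_eq, Set.mem_Ioo, not_and_or] at hN hk_in
    rcases hN with hN | hN
    · exact absurd (hinside k le_rfl) hN
    · rcases hstep k with h | h <;> omega
  calc exitTime g i S ≤ ((k + 1 : ℕ) : ℝ≥0∞) := iInf₂_le _ ⟨by omega, hexit⟩
    _ = ∑ m ∈ range (k + 1), (stayedInside g i m).indicator 1 S := by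
      rw [sum_congr rfl fun m hm => Set.indicator_of_mem
        (hinside m (Nat.lt_succ_iff.1 (mem_range.1 hm))) _]
      simp
    _ ≤ _ := ENNReal.sum_le_tsum _

lemma measure_eq_sum_inter_eval {ν : Measure (ℕ → ℤ)} {C : Set (ℕ → ℤ)}
    (hC : MeasurableSet C) {n : ℕ} {s : Finset ℤ} (hCs : ∀ S ∈ C, S n ∈ s) :
    ν C = ∑ x ∈ s, ν (C ∩ {S | S n = x}) := by
  have hcover : C = ⋃ x ∈ s, C ∩ {S | S n = x} := by
    ext S
    simp only [Set.mem_iUnion, Set.mem_inter_iff, Set.mem_ofPred_eq, exists_prop]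
    exact ⟨fun hS => ⟨S n, hCs S hS, hS, rfl⟩, fun ⟨_, _, hS, _⟩ => hS⟩
  conv_lhs => rw [hcover]
  refine measure_biUnion_finset (fun x _ y _ hxy => ?_)
    fun x _ => hC.inter (measurableSet_eval_eq n x)
  exact Set.disjoint_left.2 fun S hx hy => hxy (hx.2.symm.trans hy.2)

structure IsWalkInEnvironment (ω : ℤ → ℝ) (ν : Measure (ℕ → ℤ)) : Prop where
  step_up : ∀ (i : ℤ) (n : ℕ) (A : Set (ℕ → ℤ)), MeasurableSet A → IsDeterminedUpTo n A →
    ν (A ∩ {S | S n = i ∧ S (n + 1) = i + 1})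
      = ENNReal.ofReal (ω i) * ν (A ∩ {S | S n = i})
  step_down : ∀ (i : ℤ) (n : ℕ) (A : Set (ℕ → ℤ)), MeasurableSet A → IsDeterminedUpTo n A →
    ν (A ∩ {S | S n = i ∧ S (n + 1) = i - 1})
      = ENNReal.ofReal (1 - ω i) * ν (A ∩ {S | S n = i})

namespace IsWalkInEnvironment

variable {ω : ℤ → ℝ} {ν : Measure (ℕ → ℤ)}

lemma ae_step [IsFiniteMeasure ν] (hwalk : IsWalkInEnvironment ω ν)
    (hω : ∀ i, ω i ∈ Set.Icc (0 : ℝ) 1) (n : ℕ) :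
    ∀ᵐ S ∂ν, S (n + 1) = S n + 1 ∨ S (n + 1) = S n - 1 := by
  let level (y : ℤ) : Set (ℕ → ℤ) := {S | S n = y}
  let up (y : ℤ) : Set (ℕ → ℤ) := {S | S n = y ∧ S (n + 1) = y + 1}
  let down (y : ℤ) : Set (ℕ → ℤ) := {S | S n = y ∧ S (n + 1) = y - 1}
  have hnull : ∀ y, ν (level y \ (up y ∪ down y)) = 0 := by
    intro y
    have hup := hwalk.step_up y n Set.univ .univ fun _ _ _ => Iff.rfl
    have hdown := hwalk.step_down y n Set.univ .univ fun _ _ _ => Iff.rfl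
    simp only [Set.univ_inter] at hup hdown
    have hmeas : MeasurableSet (up y ∪ down y) :=
      ((measurableSet_eval_eq n y).inter (measurableSet_eval_eq (n + 1) _)).union
        ((measurableSet_eval_eq n y).inter (measurableSet_eval_eq (n + 1) _))
    have hdisj : Disjoint (up y) (down y) :=
      Set.disjoint_left.2 fun S hu hd => by have := hu.2.symm.trans hd.2; omega
    have htotal : ν (up y ∪ down y) = ν (level y) := by
      rw [measure_union hdisj ((measurableSet_eval_eq n y).inter (measurableSet_eval_eq _ _)),
        hup, hdown, ← add_mul, ← ENNReal.ofReal_add (hω y).1 (by linarith [(hω y).2]),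
        add_sub_cancel, ENNReal.ofReal_one, one_mul]
    rw [measure_sdiff (s₁ := level y) (fun S hS => hS.elim And.left And.left)
      hmeas.nullMeasurableSet (measure_ne_top _ _), htotal, tsub_self]
  refine ae_iff.2 (measure_mono_null (fun S hS => ?_) (measure_iUnion_null hnull))
  refine Set.mem_iUnion.2 ⟨S n, rfl, ?_⟩
  rintro (⟨-, h⟩ | ⟨-, h⟩) <;> exact hS (by tauto)

lemma sum_mul_measure_succ_le [IsFiniteMeasure ν] (hwalk : IsWalkInEnvironment ω ν)
    (hω : ∀ i, ω i ∈ Set.Icc (0 : ℝ) 1) {n : ℕ} {x : ℤ} {A : Set (ℕ → ℤ)}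
    (hA : MeasurableSet A) (hAn : IsDeterminedUpTo n A) (hAx : ∀ S ∈ A, S n = x)
    (s : Finset ℤ) (u : ℤ → ℝ≥0∞) :
    ∑ y ∈ s, u y * ν (A ∩ {S | S (n + 1) = y})
      ≤ (ENNReal.ofReal (ω x) * u (x + 1) + ENNReal.ofReal (1 - ω x) * u (x - 1)) * ν A := by
  have hnull : ∀ y, y ≠ x + 1 → y ≠ x - 1 → ν (A ∩ {S | S (n + 1) = y}) = 0 := by
    intro y hy₁ hy₂
    refine measure_mono_null ?_ (ae_iff.1 (hwalk.ae_step hω n))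
    rintro S ⟨hSA, hSy⟩ hstep
    have := hAx S hSA
    have : S (n + 1) = y := hSy
    omega
  have hmove : ∀ d, A ∩ {S | S n = x ∧ S (n + 1) = d} = A ∩ {S | S (n + 1) = d} := fun d =>
    Set.ext fun S => ⟨fun hS => ⟨hS.1, hS.2.2⟩, fun hS => ⟨hS.1, hAx S hS.1, hS.2⟩⟩
  have hAx' : A ∩ {S | S n = x} = A := Set.inter_eq_left.2 hAx
  calc ∑ y ∈ s, u y * ν (A ∩ {S | S (n + 1) = y})
      ≤ ∑ y ∈ {x + 1, x - 1}, u y * ν (A ∩ {S | S (n + 1) = y}) := by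
        refine sum_le_sum_of_ne_zero fun y _ hy => ?_
        by_contra hy'
        simp only [mem_insert, mem_singleton, not_or] at hy'
        rw [hnull y hy'.1 hy'.2, mul_zero] at hy
        exact hy rfl
    _ = u (x + 1) * ν (A ∩ {S | S (n + 1) = x + 1})
        + u (x - 1) * ν (A ∩ {S | S (n + 1) = x - 1}) := sum_pair (by omega)
    _ = _ := by
      rw [← hmove, ← hmove, hwalk.step_up x n A hA hAn, hwalk.step_down x n A hA hAn, hAx']
      ring

lemma tsum_measure_stayedInside_le [IsProbabilityMeasure ν] (hwalk : IsWalkInEnvironment ω ν)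
    (hω : ∀ i, ω i ∈ Set.Icc (0 : ℝ) 1) {g h i : ℤ} (hh : h ∈ Set.Ioo g i)
    (hstart : ∀ᵐ S ∂ν, S 0 = h) {u : ℤ → ℝ≥0∞}
    (hu : ∀ x ∈ Set.Ioo g i,
      ENNReal.ofReal (ω x) * u (x + 1) + ENNReal.ofReal (1 - ω x) * u (x - 1) + 1 ≤ u x) :
    ∑' n, ν (stayedInside g i n) ≤ u h := by
  let A (n : ℕ) (x : ℤ) : Set (ℕ → ℤ) := stayedInside g i n ∩ {S | S n = x}
  have hA (n : ℕ) (x : ℤ) : MeasurableSet (A n x) :=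
    (measurableSet_stayedInside g i n).inter (measurableSet_eval_eq n x)
  have hpartition (n : ℕ) : ν (stayedInside g i n) = ∑ x ∈ Ioo g i, ν (A n x) :=
    measure_eq_sum_inter_eval (measurableSet_stayedInside g i n)
      fun S hS => mem_Ioo.2 (hS n le_rfl)
  let F (n : ℕ) : ℝ≥0∞ := ∑ x ∈ Ioo g i, u x * ν (A n x)
  have hF0 : F 0 ≤ u h := by
    change ∑ x ∈ Ioo g i, u x * ν (A 0 x) ≤ u h
    rw [sum_eq_single_of_mem h (mem_Ioo.2 hh) fun x _ hx => ?_]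
    · exact (mul_le_mul_right prob_le_one _).trans (mul_one _).le
    · have hnull : ν (A 0 x) = 0 :=
        measure_mono_null (fun S hS hS0 => hx (hS.2.symm.trans hS0)) (ae_iff.1 hstart)
      rw [hnull, mul_zero]
  have hnext (n : ℕ) :
      F (n + 1) ≤ ∑ x ∈ Ioo g i, ∑ y ∈ Ioo g i, u y * ν (A n x ∩ {S | S (n + 1) = y}) :=
    calc F (n + 1)
        ≤ ∑ y ∈ Ioo g i, u y * ν (stayedInside g i n ∩ {S | S (n + 1) = y}) := by
          refine sum_le_sum fun y _ => mul_le_mul_right (measure_mono ?_) _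
          exact Set.inter_subset_inter_left _ (stayedInside_antitone g i n.le_succ)
      _ = ∑ y ∈ Ioo g i, ∑ x ∈ Ioo g i, u y * ν (A n x ∩ {S | S (n + 1) = y}) := by
          refine sum_congr rfl fun y _ => ?_
          rw [measure_eq_sum_inter_eval
            ((measurableSet_stayedInside g i n).inter (measurableSet_eval_eq (n + 1) y))
            fun S hS => mem_Ioo.2 (hS.1 n le_rfl), mul_sum]
          simp only [A, Set.inter_right_comm]
      _ = _ := sum_comm
  have hstep (n : ℕ) : F (n + 1) + ν (stayedInside g i n) ≤ F n :=
    calc F (n + 1) + ν (stayedInside g i n)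
        ≤ ∑ x ∈ Ioo g i, ((ENNReal.ofReal (ω x) * u (x + 1)
            + ENNReal.ofReal (1 - ω x) * u (x - 1)) * ν (A n x) + ν (A n x)) := by
          rw [sum_add_distrib, hpartition]
          gcongr ?_ + _
          refine (hnext n).trans (sum_le_sum fun x _ => ?_)
          exact hwalk.sum_mul_measure_succ_le hω (hA n x)
            (isDeterminedUpTo_stayedInside_inter g i x n) (fun S hS => hS.2) _ u
      _ ≤ F n := by
          refine sum_le_sum fun x hx => ?_
          rw [← add_one_mul]
          gcongr
          exact hu x (mem_Ioo.1 hx)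
  exact (tsum_le_of_forall_add_le hstep).trans hF0

lemma lintegral_exitTime_le [IsProbabilityMeasure ν] (hwalk : IsWalkInEnvironment ω ν)
    (hω : ∀ i, ω i ∈ Set.Icc (0 : ℝ) 1) {g h i : ℤ} (hh : h ∈ Set.Ioo g i)
    (hstart : ∀ᵐ S ∂ν, S 0 = h) {u : ℤ → ℝ≥0∞}
    (hu : ∀ x ∈ Set.Ioo g i,
      ENNReal.ofReal (ω x) * u (x + 1) + ENNReal.ofReal (1 - ω x) * u (x - 1) + 1 ≤ u x) :
    ∫⁻ S, exitTime g i S ∂ν ≤ u h := by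
  have hsteps : ∀ᵐ S ∂ν, ∀ n, S (n + 1) = S n + 1 ∨ S (n + 1) = S n - 1 :=
    ae_all_iff.2 (hwalk.ae_step hω)
  calc ∫⁻ S, exitTime g i S ∂ν
      ≤ ∫⁻ S, ∑' n, (stayedInside g i n).indicator 1 S ∂ν := by
        refine lintegral_mono_ae ?_
        filter_upwards [hstart, hsteps] with S h0 hS
        exact exitTime_le_tsum_indicator (h0 ▸ hh) hS
    _ = ∑' n, ν (stayedInside g i n) := by
        rw [lintegral_tsum fun n =>
          (measurable_one.indicator (measurableSet_stayedInside g i n)).aemeasurable]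
        simp_rw [lintegral_indicator_one (measurableSet_stayedInside g i _)]
    _ ≤ u h := hwalk.tsum_measure_stayedInside_le hω hh hstart hu

end IsWalkInEnvironment

section Potential

variable (V : ℤ → ℝ)

noncomputable def exitWeight (l k : ℤ) : ℝ := (1 + exp (V l - V (l - 1))) * exp (V k - V l)

noncomputable def exitTimeBound (g i x : ℤ) : ℝ :=
  ∑ k ∈ Icc x (i - 1), ∑ l ∈ Icc g k, exitWeight V l k

variable {V}

lemma exitTimeBound_nonneg (g i x : ℤ) : 0 ≤ exitTimeBound V g i x :=
  sum_nonneg fun _ _ => sum_nonneg fun _ _ => by unfold exitWeight; positivity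

lemma exitTimeBound_eq_add_succ {g i x : ℤ} (hx : x ≤ i - 1) :
    exitTimeBound V g i x = ∑ l ∈ Icc g x, exitWeight V l x + exitTimeBound V g i (x + 1) := by
  rw [exitTimeBound, ← insert_Icc_succ_left_eq_Icc hx, sum_insert (by simp),
    Order.succ_eq_add_one, exitTimeBound]

lemma sum_exitWeight_eq {g x : ℤ} (hgx : g ≤ x) :
    ∑ l ∈ Icc g x, exitWeight V l x = (1 + exp (V x - V (x - 1)))
      + exp (V x - V (x - 1)) * ∑ l ∈ Icc g (x - 1), exitWeight V l (x - 1) := by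
  rw [← insert_Icc_pred_right_eq_Icc hgx, sum_insert (by simp), Order.pred_eq_sub_one, mul_sum]
  congr 1
  · simp [exitWeight]
  · refine sum_congr rfl fun l _ => ?_
    rw [exitWeight, exitWeight, show V x - V l = (V x - V (x - 1)) + (V (x - 1) - V l) by ring,
      exp_add]
    ring

lemma exitTimeBound_harmonic {ω : ℤ → ℝ} {g i x : ℤ} (hgx : g < x) (hxi : x < i)
    (hρ : ω x * exp (V x - V (x - 1)) = 1 - ω x) :
    ω x * exitTimeBound V g i (x + 1) + (1 - ω x) * exitTimeBound V g i (x - 1) + 1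
      = exitTimeBound V g i x := by
  have hprev := exitTimeBound_eq_add_succ (V := V) (g := g) (i := i) (x := x - 1) (by omega)
  have hcur := exitTimeBound_eq_add_succ (V := V) (g := g) (i := i) (x := x) (by omega)
  rw [sub_add_cancel] at hprev
  rw [hprev]
  linear_combination (-ω x) * hcur - ω x * sum_exitWeight_eq (V := V) hgx.le
    - (1 + ∑ l ∈ Icc g (x - 1), exitWeight V l (x - 1)) * hρ

lemma exitWeight_le {l k : ℤ} {M : ℝ} (hM : 0 ≤ M) (hl : V l - V (l - 1) ≤ M)
    (hk : V k - V l ≤ M) : exitWeight V l k ≤ 2 * exp (2 * M) :=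
  calc exitWeight V l k ≤ (exp M + exp M) * exp M := by
        unfold exitWeight
        gcongr
        exact one_le_exp hM
    _ = 2 * exp (2 * M) := by rw [two_mul M, exp_add]; ring

lemma exitTimeBound_le {g h i : ℤ} (hgh : g ≤ h) (hhi : h ≤ i) {M : ℝ} (hM0 : 0 ≤ M)
    (hM : ∀ l k : ℤ, g - 1 ≤ l → l ≤ k → k ≤ i - 1 → V k - V l ≤ M) :
    exitTimeBound V g i h ≤ 2 * ((i : ℝ) - g + 1) ^ 2 * exp (2 * M) := by
  have hcard {a b : ℤ} (ha : g ≤ a) (hb : b ≤ i) : (#(Icc a b) : ℝ) ≤ i - g + 1 := by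
    have hle : #(Icc a b) ≤ #(Icc g i) := card_le_card (Icc_subset_Icc ha hb)
    have hgi : (#(Icc g i) : ℤ) = i + 1 - g := Int.card_Icc_of_le _ _ (by omega)
    have : ((#(Icc a b) : ℤ) : ℝ) ≤ i + 1 - g := by
      exact_mod_cast (Nat.cast_le.2 hle).trans hgi.le
    push_cast at this
    linarith
  have hN : (0 : ℝ) ≤ i - g + 1 := by
    have : (g : ℝ) ≤ i := by exact_mod_cast hgh.trans hhi
    linarith
  calc exitTimeBound V g i h
      ≤ ∑ k ∈ Icc h (i - 1), #(Icc g k) • (2 * exp (2 * M)) := by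
        refine sum_le_sum fun k hk => sum_le_card_nsmul _ _ _ fun l hl => ?_
        rw [mem_Icc] at hk hl
        exact exitWeight_le hM0 (hM _ _ (by omega) (by omega) (by omega))
          (hM _ _ (by omega) hl.2 hk.2)
    _ ≤ ∑ k ∈ Icc h (i - 1), ((i : ℝ) - g + 1) * (2 * exp (2 * M)) := by
        refine sum_le_sum fun k hk => ?_
        rw [nsmul_eq_mul]
        gcongr
        exact hcard le_rfl (by linarith [(mem_Icc.1 hk).2])
    _ ≤ ((i : ℝ) - g + 1) * (((i : ℝ) - g + 1) * (2 * exp (2 * M))) := by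
        rw [sum_const, nsmul_eq_mul]
        gcongr
        exact hcard hgh (by omega)
    _ = 2 * ((i : ℝ) - g + 1) ^ 2 * exp (2 * M) := by ring

end Potential

lemma ENNReal.ofReal_mul_add_mul_add_one {p q a b : ℝ} (hp : 0 ≤ p) (hq : 0 ≤ q) (ha : 0 ≤ a)
    (hb : 0 ≤ b) :
    ENNReal.ofReal (p * a + q * b + 1)
      = ENNReal.ofReal p * ENNReal.ofReal a + ENNReal.ofReal q * ENNReal.ofReal b + 1 := by
  rw [ENNReal.ofReal_add (by positivity) zero_le_one, ENNReal.ofReal_add (by positivity)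
    (by positivity), ENNReal.ofReal_mul hp, ENNReal.ofReal_mul hq, ENNReal.ofReal_one]

theorem stmt18_general (ω : ℤ → ℝ) (hω : ∀ i, ω i ∈ Set.Ioo (0 : ℝ) 1)
    (μ : ℤ → Measure (ℕ → ℤ)) (hprob : ∀ x, IsProbabilityMeasure (μ x))
    (hstart : ∀ x : ℤ, μ x {S | S 0 = x} = 1)
    (hup : ∀ (x i : ℤ) (n : ℕ) (A : Set (ℕ → ℤ)), MeasurableSet A →
      (∀ S S' : ℕ → ℤ, (∀ m ≤ n, S m = S' m) → (S ∈ A ↔ S' ∈ A)) →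
      μ x (A ∩ {S | S n = i ∧ S (n + 1) = i + 1})
        = ENNReal.ofReal (ω i) * μ x (A ∩ {S | S n = i}))
    (hdown : ∀ (x i : ℤ) (n : ℕ) (A : Set (ℕ → ℤ)), MeasurableSet A →
      (∀ S S' : ℕ → ℤ, (∀ m ≤ n, S m = S' m) → (S ∈ A ↔ S' ∈ A)) →
      μ x (A ∩ {S | S n = i ∧ S (n + 1) = i - 1})
        = ENNReal.ofReal (1 - ω i) * μ x (A ∩ {S | S n = i}))
    (V : ℤ → ℝ)
    (hV : ∀ k : ℤ, V k - V (k - 1) = Real.log ((1 - ω k) / ω k))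
    (g h i : ℤ) (hgh : g < h) (hhi : h < i) :
    (∫⁻ S, exitTime g i S ∂(μ h))
        ≤ ENNReal.ofReal (∑ k ∈ Finset.Icc h (i - 1), ∑ l ∈ Finset.Icc g k,
            (1 + Real.exp (V l - V (l - 1))) * Real.exp (V k - V l))
    ∧ ∀ M : ℝ, 0 ≤ M → (∀ l k : ℤ, g - 1 ≤ l → l ≤ k → k ≤ i - 1 → V k - V l ≤ M) →
        (∫⁻ S, exitTime g i S ∂(μ h))
          ≤ ENNReal.ofReal (2 * ((i : ℝ) - (g : ℝ) + 1) ^ 2 * Real.exp (2 * M)) := by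
  have hωIcc (x : ℤ) : ω x ∈ Set.Icc (0 : ℝ) 1 := Set.Ioo_subset_Icc_self (hω x)
  have hρ (x : ℤ) : ω x * exp (V x - V (x - 1)) = 1 - ω x := by
    have := hω x
    rw [hV, exp_log (div_pos (by linarith [this.2]) this.1), mul_div_cancel₀ _ this.1.ne']
  have hwalk : IsWalkInEnvironment ω (μ h) := ⟨hup h, hdown h⟩
  have hstart_ae : ∀ᵐ S ∂(μ h), S 0 = h :=
    ae_iff.2 ((prob_compl_eq_zero_iff (measurableSet_eval_eq 0 h)).2 (hstart h))
  have hbound : ∫⁻ S, exitTime g i S ∂(μ h) ≤ ENNReal.ofReal (exitTimeBound V g i h) := by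
    refine hwalk.lintegral_exitTime_le (u := fun x => ENNReal.ofReal (exitTimeBound V g i x))
      hωIcc ⟨hgh, hhi⟩ hstart_ae fun x hx => ?_
    rw [← exitTimeBound_harmonic hx.1 hx.2 (hρ x), ENNReal.ofReal_mul_add_mul_add_one
      (hωIcc x).1 (sub_nonneg.2 (hωIcc x).2) (exitTimeBound_nonneg _ _ _)
      (exitTimeBound_nonneg _ _ _)]
  exact ⟨hbound, fun M hM0 hM => hbound.trans
    (ENNReal.ofReal_le_ofReal (exitTimeBound_le hgh.le hhi.le hM0 hM))⟩

/-- Quenched expected exit time bound: for the walk started at `h` with `g < h < i`,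
`E_ω^h[τ(g) ∧ τ(i)] ≤ Σ_{k=h}^{i−1} Σ_{l=g}^{k} (1 + e^{V l − V (l−1)}) e^{V k − V l}`,
and consequently `E_ω^h[τ(g) ∧ τ(i)] ≤ 2 (i−g+1)² e^{2M}` where
`M ≥ max_{g−1 ≤ l ≤ k ≤ i−1} (V k − V l)`. -/
theorem stmt18 (ω : ℤ → ℝ) (hω : ∀ i, ω i ∈ Set.Ioo (0 : ℝ) 1)
    (μ : ℤ → Measure (ℕ → ℤ)) (hprob : ∀ x, IsProbabilityMeasure (μ x))
    (hstart : ∀ x : ℤ, μ x {S | S 0 = x} = 1)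
    (hup : ∀ (x i : ℤ) (n : ℕ) (A : Set (ℕ → ℤ)), MeasurableSet A →
      (∀ S S' : ℕ → ℤ, (∀ m ≤ n, S m = S' m) → (S ∈ A ↔ S' ∈ A)) →
      μ x (A ∩ {S | S n = i ∧ S (n + 1) = i + 1})
        = ENNReal.ofReal (ω i) * μ x (A ∩ {S | S n = i}))
    (hdown : ∀ (x i : ℤ) (n : ℕ) (A : Set (ℕ → ℤ)), MeasurableSet A →
      (∀ S S' : ℕ → ℤ, (∀ m ≤ n, S m = S' m) → (S ∈ A ↔ S' ∈ A)) →
      μ x (A ∩ {S | S n = i ∧ S (n + 1) = i - 1})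
        = ENNReal.ofReal (1 - ω i) * μ x (A ∩ {S | S n = i}))
    (V : ℤ → ℝ) (hV0 : V 0 = 0)
    (hV : ∀ k : ℤ, V k - V (k - 1) = Real.log ((1 - ω k) / ω k))
    (g h i : ℤ) (hgh : g < h) (hhi : h < i) :
    (∫⁻ S, exitTime g i S ∂(μ h))
        ≤ ENNReal.ofReal (∑ k ∈ Finset.Icc h (i - 1), ∑ l ∈ Finset.Icc g k,
            (1 + Real.exp (V l - V (l - 1))) * Real.exp (V k - V l))
    ∧ ∀ M : ℝ, 0 ≤ M → (∀ l k : ℤ, g - 1 ≤ l → l ≤ k → k ≤ i - 1 → V k - V l ≤ M) →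
        (∫⁻ S, exitTime g i S ∂(μ h))
          ≤ ENNReal.ofReal (2 * ((i : ℝ) - (g : ℝ) + 1) ^ 2 * Real.exp (2 * M)) :=
  stmt18_general ω hω μ hprob hstart hup hdown V hV g h i hgh hhi
end
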